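/- Let q be a prime power and A = 𝔽_q[T]. Let P ∈ A be a monic irreducible polynomial, α ∈ 𝔽_q^×, and M_P = α·C_P(1) the associated Mersenne number. Then every monic irreducible polynomial Q ∈ A dividing M_P satisfies Q ≡ 1 (mod P). -/

import Mathlib

open Polynomial

/-- Compositional iterates of the Carlitz polynomial `C_T(x) = T·x + x^q`, so that
`carlitzTpow F n = C_{T^n}(x) ∈ (𝔽_q[T])[x]` (here `q = Fintype.card F`). -/
noncomputable def carlitzTpow (F : Type) [Field F] [Fintype F] : ℕ → Polynomial (Polynomial F)
  | 0 => X
  | n + 1 => (carlitzTpow F n).comp (Polynomial.C Polynomial.X * X + X ^ (Fintype.card F))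

/-- The Carlitz module polynomial `C_m(x) ∈ (𝔽_q[T])[x]` for `m ∈ A = 𝔽_q[T]`:
it is determined by `𝔽_q`-linearity in `m` together with
`C_{T^n}(x) = C_T(C_T(⋯ C_T(x)⋯))` (`n`-fold composition of `C_T(x) = T·x + x^q`). -/
noncomputable def carlitz (F : Type) [Field F] [Fintype F] (m : Polynomial F) :
    Polynomial (Polynomial F) :=
  m.sum fun i c => Polynomial.C (Polynomial.C c) * carlitzTpow F i

/-- Evaluation `C_m(α) ∈ 𝔽_q[T]` of the Carlitz polynomial `C_m(x)` at `α ∈ 𝔽_q[T]`. -/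
noncomputable def carlitzEval (F : Type) [Field F] [Fintype F] (m α : Polynomial F) :
    Polynomial F :=
  (carlitz F m).eval α

/-!
Write `C_m(x) = ∑ⱼ [m, j] x^{q^j}`. Then `[m, 0] = m`, `[m, deg m] = 1` for monic `m`, and,
since `C_m` commutes with `C_T(x) = T x + x^q`, `[m, j+1] (T^{q^{j+1}} - T) = [m, j]^q - [m, j]`.
For `Q` monic irreducible of degree `d`, `Q` divides no `T^{q^j} - T` with `0 < j < d`, so by
induction `Q ∣ [Q, j]` for `j < d`; hence `C_Q(u) ≡ u^{q^d} (mod Q)`, and in particular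
`C_{Q-1}(1) ≡ 0 (mod Q)`. The `m` with `C_m(1) ≡ 0 (mod Q)` form a proper ideal containing the
maximal ideal `(P)`, so it equals `(P)` and `P ∣ Q - 1`.
-/

section Frobenius

variable {F : Type} [Field F] [Fintype F] {R : Type*} [CommRing R] [Algebra F R]

local notation "q" => Fintype.card F

theorem add_pow_card (x y : R) : (x + y) ^ q = x ^ q + y ^ q :=
  map_add (FiniteField.frobeniusAlgHom F R) x y

theorem sub_pow_card (x y : R) : (x - y) ^ q = x ^ q - y ^ q :=
  map_sub (FiniteField.frobeniusAlgHom F R) x y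

theorem sum_pow_card {ι : Type*} (s : Finset ι) (f : ι → R) :
    (∑ i ∈ s, f i) ^ q = ∑ i ∈ s, f i ^ q :=
  map_sum (FiniteField.frobeniusAlgHom F R) f s

end Frobenius

section CarlitzModule

variable {F : Type} [Field F] [Fintype F]

local notation "q" => Fintype.card F

theorem carlitzTpow_succ (n : ℕ) :
    carlitzTpow F (n + 1) = C X * carlitzTpow F n + carlitzTpow F n ^ q := by
  induction n with
  | zero => exact X_comp
  | succ n ih =>
    change (carlitzTpow F (n + 1)).comp _ = _
    conv_lhs => rw [ih, add_comp, mul_comp, C_comp, pow_comp]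
    rfl

theorem carlitz_monomial (n : ℕ) (a : F) :
    carlitz F (monomial n a) = C (C a) * carlitzTpow F n := by
  simp [carlitz]

theorem carlitz_add (m n : F[X]) : carlitz F (m + n) = carlitz F m + carlitz F n := by
  unfold carlitz
  rw [sum_add_index] <;> simp [add_mul]

theorem carlitz_one : carlitz F 1 = X := by
  simpa [carlitzTpow] using carlitz_monomial (F := F) 0 1

theorem carlitz_sub (m n : F[X]) : carlitz F (m - n) = carlitz F m - carlitz F n := by
  rw [eq_sub_iff_add_eq, ← carlitz_add, sub_add_cancel]

theorem carlitz_C_mul (c : F) (m : F[X]) : carlitz F (C c * m) = C (C c) * carlitz F m := by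
  induction m using Polynomial.induction_on' with
  | add m n hm hn => rw [mul_add, carlitz_add, carlitz_add, hm, hn, mul_add]
  | monomial n a =>
    rw [C_mul_monomial, carlitz_monomial, carlitz_monomial, ← mul_assoc, ← C_mul, ← C_mul]

theorem carlitz_X_mul (m : F[X]) :
    carlitz F (X * m) = C X * carlitz F m + carlitz F m ^ q := by
  induction m using Polynomial.induction_on' with
  | add m n hm hn =>
    rw [mul_add, carlitz_add, carlitz_add, hm, hn, add_pow_card]
    ring
  | monomial n a =>
    rw [X_mul_monomial, carlitz_monomial, carlitz_monomial, carlitzTpow_succ, mul_pow,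
      ← map_pow, ← map_pow, FiniteField.pow_card]
    ring

variable (F) in
/-- The coefficient of `x^{q^j}` in `C_{T^n}(x)`. -/
noncomputable def carlitzTpowCoeff : ℕ → ℕ → F[X]
  | 0, 0 => 1
  | 0, _ + 1 => 0
  | n + 1, 0 => X * carlitzTpowCoeff n 0
  | n + 1, j + 1 => X * carlitzTpowCoeff n (j + 1) + carlitzTpowCoeff n j ^ q

variable (F) in
noncomputable def carlitzCoeff (m : F[X]) (j : ℕ) : F[X] :=
  m.sum fun i c => C c * carlitzTpowCoeff F i j

theorem carlitzTpowCoeff_eq_zero_of_lt {n j : ℕ} (h : n < j) : carlitzTpowCoeff F n j = 0 := by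
  induction n generalizing j with
  | zero => obtain ⟨j, rfl⟩ := Nat.exists_eq_succ_of_ne_zero h.ne'; rfl
  | succ n ih =>
    obtain ⟨j, rfl⟩ := Nat.exists_eq_succ_of_ne_zero (n.succ_pos.trans h).ne'
    rw [carlitzTpowCoeff, ih (by omega), ih (by omega), zero_pow Fintype.card_ne_zero]
    ring

theorem carlitzTpowCoeff_self (n : ℕ) : carlitzTpowCoeff F n n = 1 := by
  induction n with
  | zero => rfl
  | succ n ih => rw [carlitzTpowCoeff, ih, carlitzTpowCoeff_eq_zero_of_lt n.lt_succ_self]; ring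

theorem carlitzTpowCoeff_zero_right (n : ℕ) : carlitzTpowCoeff F n 0 = X ^ n := by
  induction n with
  | zero => rfl
  | succ n ih => rw [carlitzTpowCoeff, ih, pow_succ']

theorem carlitzTpowCoeff_succ_mul (n j : ℕ) :
    carlitzTpowCoeff F n (j + 1) * (X ^ q ^ (j + 1) - X) =
      carlitzTpowCoeff F n j ^ q - carlitzTpowCoeff F n j := by
  induction n generalizing j with
  | zero => cases j <;> simp [carlitzTpowCoeff, zero_pow Fintype.card_ne_zero]
  | succ n ih =>
    cases j with
    | zero =>
      simp only [carlitzTpowCoeff]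
      linear_combination (X : F[X]) * ih 0
    | succ j =>
      have ih_frob : carlitzTpowCoeff F n (j + 1) ^ q * (X ^ q ^ (j + 2) - X ^ q) =
          (carlitzTpowCoeff F n j ^ q) ^ q - carlitzTpowCoeff F n j ^ q := by
        have := congrArg (· ^ q) (ih j)
        simpa only [mul_pow, sub_pow_card, ← pow_mul, ← pow_succ] using this
      simp only [carlitzTpowCoeff]
      rw [add_pow_card, mul_pow]
      linear_combination (X : F[X]) * ih (j + 1) + ih_frob

theorem carlitzTpow_eq_sum (n : ℕ) :
    carlitzTpow F n = ∑ j ∈ Finset.range (n + 1), C (carlitzTpowCoeff F n j) * X ^ q ^ j := by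
  induction n with
  | zero => simp [carlitzTpow, carlitzTpowCoeff]
  | succ n ih =>
    have frob_term (j : ℕ) : (C (carlitzTpowCoeff F n j) * X ^ q ^ j) ^ q =
        C (carlitzTpowCoeff F n j ^ q) * X ^ q ^ (j + 1) := by
      rw [mul_pow, C_pow, ← pow_mul, pow_succ]
    rw [carlitzTpow_succ, ih, sum_pow_card, Finset.mul_sum, Finset.sum_range_succ' _ n,
      Finset.sum_range_succ' _ (n + 1)]
    simp only [carlitzTpowCoeff, C_add, C_mul, add_mul, Finset.sum_add_distrib, frob_term]
    rw [Finset.sum_range_succ (fun j => C X * C (carlitzTpowCoeff F n (j + 1)) * _),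
      carlitzTpowCoeff_eq_zero_of_lt n.lt_succ_self]
    simp only [C_0, mul_zero, zero_mul, add_zero, mul_assoc]
    ring

theorem carlitzCoeff_zero_right (m : F[X]) : carlitzCoeff F m 0 = m := by
  simp only [carlitzCoeff, carlitzTpowCoeff_zero_right]
  exact sum_C_mul_X_pow_eq m

theorem carlitzCoeff_natDegree {m : F[X]} (hm : m.Monic) : carlitzCoeff F m m.natDegree = 1 := by
  rw [carlitzCoeff, sum_over_range' m (by simp) _ m.natDegree.lt_succ_self,
    Finset.sum_range_succ, Finset.sum_eq_zero fun i hi => by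
      rw [carlitzTpowCoeff_eq_zero_of_lt (Finset.mem_range.mp hi), mul_zero],
    carlitzTpowCoeff_self, hm.coeff_natDegree, C_1, mul_one, zero_add]

theorem carlitzCoeff_succ_mul (m : F[X]) (j : ℕ) :
    carlitzCoeff F m (j + 1) * (X ^ q ^ (j + 1) - X) =
      carlitzCoeff F m j ^ q - carlitzCoeff F m j := by
  simp only [carlitzCoeff, Polynomial.sum_def, Finset.sum_mul, sum_pow_card,
    ← Finset.sum_sub_distrib]
  refine Finset.sum_congr rfl fun i _ => ?_
  rw [mul_pow, ← C_pow, FiniteField.pow_card, mul_assoc, carlitzTpowCoeff_succ_mul, mul_sub]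

theorem carlitz_eq_sum (m : F[X]) :
    carlitz F m = ∑ j ∈ Finset.range (m.natDegree + 1), C (carlitzCoeff F m j) * X ^ q ^ j := by
  set N := m.natDegree + 1
  have tpow_eq_sum {i : ℕ} (hi : i ∈ Finset.range N) :
      carlitzTpow F i = ∑ j ∈ Finset.range N, C (carlitzTpowCoeff F i j) * X ^ q ^ j := by
    rw [carlitzTpow_eq_sum]
    refine Finset.sum_subset (Finset.range_subset_range.mpr (Finset.mem_range.mp hi))
      fun j _ hj => ?_
    rw [carlitzTpowCoeff_eq_zero_of_lt (by simpa using hj), C_0, zero_mul]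
  have hN : m.natDegree < N := m.natDegree.lt_succ_self
  rw [carlitz, sum_over_range' m (by simp) N hN, Finset.sum_congr rfl fun i hi => by
    rw [tpow_eq_sum hi]]
  conv_rhs => enter [2, j]; rw [carlitzCoeff, sum_over_range' m (by simp) N hN]
  simp only [Finset.mul_sum, map_sum, Finset.sum_mul, C_mul, mul_assoc]
  exact Finset.sum_comm

theorem dvd_carlitzCoeff_of_lt_natDegree {Q : F[X]} (hQ : Irreducible Q) {j : ℕ}
    (hj : j < Q.natDegree) : Q ∣ carlitzCoeff F Q j := by
  induction j with
  | zero => rw [carlitzCoeff_zero_right]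
  | succ j ih =>
    have hprev := ih (by omega)
    have hprod : Q ∣ carlitzCoeff F Q (j + 1) * (X ^ q ^ (j + 1) - X) := by
      rw [carlitzCoeff_succ_mul]
      exact dvd_sub (dvd_pow hprev Fintype.card_ne_zero) hprev
    refine (hQ.prime.dvd_or_dvd hprod).resolve_right fun hdvd => ?_
    have hdeg := hQ.natDegree_dvd_of_dvd_X_pow_card_pow_sub_X (by rwa [Nat.card_eq_fintype_card])
    exact absurd (Nat.le_of_dvd j.succ_pos hdeg) (by omega)

theorem dvd_carlitzEval_self_sub_pow {Q : F[X]} (hQ : Q.Monic) (hQirr : Irreducible Q)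
    (u : F[X]) : Q ∣ carlitzEval F Q u - u ^ q ^ Q.natDegree := by
  rw [carlitzEval, carlitz_eq_sum, eval_finsetSum, Finset.sum_range_succ,
    carlitzCoeff_natDegree hQ]
  simp only [eval_mul, eval_C, eval_pow, eval_X, one_mul, add_sub_cancel_right]
  exact Finset.dvd_sum fun j hj =>
    (dvd_carlitzCoeff_of_lt_natDegree hQirr (Finset.mem_range.mp hj)).mul_right _

theorem dvd_carlitzEval_mul {Q m u : F[X]} (h : Q ∣ carlitzEval F m u) (a : F[X]) :
    Q ∣ carlitzEval F (a * m) u := by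
  induction a using Polynomial.induction_on with
  | C c =>
    rw [carlitzEval, carlitz_C_mul, eval_mul, eval_C]
    exact h.mul_left _
  | add a b ha hb =>
    rw [carlitzEval, add_mul, carlitz_add, eval_add]
    exact dvd_add ha hb
  | monomial n c ih =>
    rw [show C c * X ^ (n + 1) * m = X * (C c * X ^ n * m) by ring, carlitzEval, carlitz_X_mul,
      eval_add, eval_mul, eval_C, eval_pow]
    exact dvd_add (ih.mul_left _) (dvd_pow ih Fintype.card_ne_zero)

variable (F) in
noncomputable def carlitzTorsionOf (Q u : F[X]) : Ideal F[X] where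
  carrier := {m | Q ∣ carlitzEval F m u}
  add_mem' {a b} ha hb := by
    change Q ∣ carlitzEval F (a + b) u
    rw [carlitzEval, carlitz_add, eval_add]
    exact dvd_add ha hb
  zero_mem' := by simp [carlitzEval, carlitz]
  smul_mem' a _ hm := dvd_carlitzEval_mul hm a

theorem dvd_of_dvd_carlitzEval {P Q u m : F[X]} (hP : Irreducible P)
    (hPu : Q ∣ carlitzEval F P u) (hu : ¬ Q ∣ u) (hm : Q ∣ carlitzEval F m u) : P ∣ m := by
  have hne : carlitzTorsionOf F Q u ≠ ⊤ := fun htop => by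
    have hone : (1 : F[X]) ∈ carlitzTorsionOf F Q u := htop ▸ Submodule.mem_top
    exact hu (by simpa [carlitzTorsionOf, carlitzEval, carlitz_one] using hone)
  have hspan : Ideal.span {P} = carlitzTorsionOf F Q u :=
    (PrincipalIdealRing.isMaximal_of_irreducible hP).eq_of_le hne
      ((Ideal.span_singleton_le_iff_mem _).mpr hPu)
  exact Ideal.mem_span_singleton.mp (hspan ▸ hm)

end CarlitzModule

theorem prime_divisor_of_mersenne_congruent_one_general (F : Type) [Field F] [Fintype F]
    (P : Polynomial F) (hPirr : Irreducible P) (α : F) (hα : α ≠ 0)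
    (Q : Polynomial F) (hQ : Q.Monic) (hQirr : Irreducible Q)
    (hdvd : Q ∣ Polynomial.C α * carlitzEval F P 1) :
    P ∣ Q - 1 := by
  have hQP : Q ∣ carlitzEval F P 1 := (isUnit_C.mpr hα.isUnit).dvd_mul_left.mp hdvd
  have hQ1 : Q ∣ carlitzEval F (Q - 1) 1 := by
    simpa [carlitzEval, carlitz_sub, carlitz_one] using dvd_carlitzEval_self_sub_pow hQ hQirr 1
  exact dvd_of_dvd_carlitzEval hPirr hQP (hQirr.not_isUnit ∘ isUnit_of_dvd_one) hQ1

/-- Every monic irreducible `Q` dividing the Mersenne number `M_P = α·C_P(1)` satisfies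
`Q ≡ 1 (mod P)`. -/
theorem prime_divisor_of_mersenne_congruent_one (F : Type) [Field F] [Fintype F]
    (P : Polynomial F) (hP : P.Monic) (hPirr : Irreducible P) (α : F) (hα : α ≠ 0)
    (Q : Polynomial F) (hQ : Q.Monic) (hQirr : Irreducible Q)
    (hdvd : Q ∣ Polynomial.C α * carlitzEval F P 1) :
    P ∣ Q - 1 :=
  prime_divisor_of_mersenne_congruent_one_general F P hPirr α hα Q hQ hQirr hdvd
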